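/- Let λ ∈ ℝ and let A_λ be the fuzzy sphere algebra with generators x₁, x₂, x₃. Then the 2×2 matrix over A_λ given by P = (1/2)·[[(1+λ)·1 − x₃, x₁ + i x₂], [x₁ − i x₂, (1+λ)·1 + x₃]] satisfies P² = P. -/
import Mathlib


open scoped BigOperators

/-- The Levi-Civita symbol on `{1,2,3}` (totally antisymmetric, `ε₁₂₃ = 1`), as a complex
number. -/
noncomputable def epsC (i j k : Fin 3) : ℂ :=
  (((j : ℕ) : ℂ) - ((i : ℕ) : ℂ)) * (((k : ℕ) : ℂ) - ((j : ℕ) : ℂ)) *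
    (((k : ℕ) : ℂ) - ((i : ℕ) : ℂ)) / 2

/-- The defining relations of the fuzzy sphere algebra: the commutation relations
`x_i x_j − x_j x_i = 2iλ ε_{ijk} x_k` and the sphere relation `Σ x_i² = 1 − λ²`. -/
inductive FuzzyRel (t : ℝ) : FreeAlgebra ℂ (Fin 3) → FreeAlgebra ℂ (Fin 3) → Prop
  | comm (i j : Fin 3) : FuzzyRel t
      (FreeAlgebra.ι ℂ i * FreeAlgebra.ι ℂ j - FreeAlgebra.ι ℂ j * FreeAlgebra.ι ℂ i)
      (∑ k, (2 * Complex.I * (t : ℂ) * epsC i j k) • FreeAlgebra.ι ℂ k)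
  | sphere : FuzzyRel t (∑ i, FreeAlgebra.ι ℂ i * FreeAlgebra.ι ℂ i)
      ((1 - (t : ℂ) ^ 2) • (1 : FreeAlgebra ℂ (Fin 3)))

/-- The fuzzy sphere algebra `A_λ`, the quotient of the free algebra on `x₁,x₂,x₃` by the
two-sided ideal generated by the fuzzy sphere relations. -/
abbrev FuzzyS2 (t : ℝ) := RingQuot (FuzzyRel t)

/-- The generators `x_i` of the fuzzy sphere algebra. -/
noncomputable def xgen (t : ℝ) (i : Fin 3) : FuzzyS2 t :=
  RingQuot.mkAlgHom ℂ (FuzzyRel t) (FreeAlgebra.ι ℂ i)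

lemma fuzzy_comm (t : ℝ) (i j : Fin 3) :
    xgen t i * xgen t j - xgen t j * xgen t i
      = ∑ k, (2 * Complex.I * (t : ℂ) * epsC i j k) • xgen t k := by
  have h := RingQuot.mkAlgHom_rel ℂ (FuzzyRel.comm (t := t) i j)
  simpa [xgen, map_sub, map_mul, map_sum, map_smul] using h

lemma fuzzy_yx (t : ℝ) :
    xgen t 1 * xgen t 0 = xgen t 0 * xgen t 1 - (2 * Complex.I * (t:ℂ)) • xgen t 2 := by
  have h := fuzzy_comm t 0 1
  norm_num [Fin.sum_univ_three, epsC] at h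
  linear_combination (norm := module) -h

lemma fuzzy_zy (t : ℝ) :
    xgen t 2 * xgen t 1 = xgen t 1 * xgen t 2 - (2 * Complex.I * (t:ℂ)) • xgen t 0 := by
  have h := fuzzy_comm t 1 2
  norm_num [Fin.sum_univ_three, epsC] at h
  linear_combination (norm := module) -h

lemma fuzzy_zx (t : ℝ) :
    xgen t 2 * xgen t 0 = xgen t 0 * xgen t 2 + (2 * Complex.I * (t:ℂ)) • xgen t 1 := by
  have h := fuzzy_comm t 2 0
  norm_num [Fin.sum_univ_three, epsC] at h
  linear_combination (norm := module) h

lemma fuzzy_zz (t : ℝ) :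
    xgen t 2 * xgen t 2 = (1 - (t:ℂ)^2) • 1 - xgen t 0 * xgen t 0 - xgen t 1 * xgen t 1 := by
  have h := RingQuot.mkAlgHom_rel ℂ (FuzzyRel.sphere (t := t))
  have h' : xgen t 0 * xgen t 0 + xgen t 1 * xgen t 1 + xgen t 2 * xgen t 2
      = (1 - (t : ℂ) ^ 2) • 1 := by
    simpa [xgen, map_sum, map_mul, map_smul, Fin.sum_univ_three] using h
  linear_combination (norm := module) h'

/-- Abstract form of the entrywise identities needed for the projector computation. -/
lemma entry_identities (t : ℝ) {A : Type*} [Ring A] [Algebra ℂ A] (x y z : A)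
    (hyx : y * x = x * y - (2 * Complex.I * (t:ℂ)) • z)
    (hzy : z * y = y * z - (2 * Complex.I * (t:ℂ)) • x)
    (hzx : z * x = x * z + (2 * Complex.I * (t:ℂ)) • y)
    (hzz : z * z = (1 - (t:ℂ)^2) • 1 - x * x - y * y) :
    ((((1:ℂ)+t) • 1 - z) * (((1:ℂ)+t) • 1 - z) + (x + Complex.I • y) * (x - Complex.I • y)
      = (2:ℂ) • (((1:ℂ)+t) • 1 - z))
    ∧ ((((1:ℂ)+t) • 1 - z) * (x + Complex.I • y) + (x + Complex.I • y) * (((1:ℂ)+t) • 1 + z)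
      = (2:ℂ) • (x + Complex.I • y))
    ∧ ((x - Complex.I • y) * (((1:ℂ)+t) • 1 - z) + (((1:ℂ)+t) • 1 + z) * (x - Complex.I • y)
      = (2:ℂ) • (x - Complex.I • y))
    ∧ ((x - Complex.I • y) * (x + Complex.I • y) + (((1:ℂ)+t) • 1 + z) * (((1:ℂ)+t) • 1 + z)
      = (2:ℂ) • (((1:ℂ)+t) • 1 + z)) := by
  refine ⟨?_, ?_, ?_, ?_⟩ <;>
  · simp only [mul_add, add_mul, mul_sub, sub_mul, smul_mul_assoc, mul_smul_comm,
      smul_smul, mul_one, one_mul, smul_sub, smul_add, hyx, hzy, hzx, hzz]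
    match_scalars <;> first
      | ring1
      | (ring_nf; simp only [Complex.I_sq]; ring1)

/-- The fuzzy monopole projector `P` satisfies `P² = P`. -/
theorem monopole_projector (t : ℝ) :
    let P : Matrix (Fin 2) (Fin 2) (FuzzyS2 t) :=
      (2 : ℂ)⁻¹ • !![((1 : ℂ) + t) • 1 - xgen t 2, xgen t 0 + Complex.I • xgen t 1;
        xgen t 0 - Complex.I • xgen t 1, ((1 : ℂ) + t) • 1 + xgen t 2]
    P * P = P := by
  intro P
  obtain ⟨h00, h01, h10, h11⟩ :=
    entry_identities t (xgen t 0) (xgen t 1) (xgen t 2)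
      (fuzzy_yx t) (fuzzy_zy t) (fuzzy_zx t) (fuzzy_zz t)
  have key : (!![((1 : ℂ) + t) • 1 - xgen t 2, xgen t 0 + Complex.I • xgen t 1;
        xgen t 0 - Complex.I • xgen t 1, ((1 : ℂ) + t) • 1 + xgen t 2] *
      !![((1 : ℂ) + t) • 1 - xgen t 2, xgen t 0 + Complex.I • xgen t 1;
        xgen t 0 - Complex.I • xgen t 1, ((1 : ℂ) + t) • 1 + xgen t 2]) =
      (2:ℂ) • !![((1 : ℂ) + t) • 1 - xgen t 2, xgen t 0 + Complex.I • xgen t 1;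
        xgen t 0 - Complex.I • xgen t 1, ((1 : ℂ) + t) • 1 + xgen t 2] := by
    ext i j
    fin_cases i <;> fin_cases j <;>
      simp only [Matrix.mul_apply, Fin.sum_univ_two, Matrix.smul_apply,
        Matrix.cons_val', Matrix.cons_val_zero, Matrix.cons_val_one, Matrix.head_cons,
        Matrix.empty_val', Matrix.cons_val_fin_one, Matrix.head_fin_const]
    · exact h00
    · exact h01
    · exact h10
    · exact h11
  show (2:ℂ)⁻¹ • _ * (2:ℂ)⁻¹ • _ = _
  rw [smul_mul_assoc, mul_smul_comm, key, smul_smul, smul_smul]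
  congr 1
  norm_num
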